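/- arXiv:1407.5614 — 4 statements merged into one kernel-verified Lean document; each statement's English description precedes it below -/
import Mathlib

section
/- For any finite connected graph G, twice the weak tree-width is at least the tree-width plus one: 2·wtw(G) ≥ tw(G) + 1. Concretely, from any weak tree-decomposition of width w one can construct a tree-decomposition of width at most 2w − 1 by replacing each part S_i (i ≠ root) by S_i ∪ S_{p(i)}, where p(i) is the parent of i in a rooted version of the tree. -/
/-- A weak tree-decomposition of `G`. -/
def IsWeakTreeDecomp {V I : Type*} (G : SimpleGraph V) (T : SimpleGraph I)
    (S : I → Set V) : Prop :=
  T.IsTree ∧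
  (∀ v, ∃ i, v ∈ S i) ∧
  (∀ ⦃u v⦄, G.Adj u v → ∃ i j, T.Adj i j ∧ u ∈ S i ∪ S j ∧ v ∈ S i ∪ S j) ∧
  (∀ v, (T.induce {i | v ∈ S i}).Connected)

/-- A (usual) tree-decomposition of `G`: every edge lies inside a single bag. -/
def IsTreeDecomp {V I : Type*} (G : SimpleGraph V) (T : SimpleGraph I)
    (S : I → Set V) : Prop :=
  T.IsTree ∧
  (∀ v, ∃ i, v ∈ S i) ∧
  (∀ ⦃u v⦄, G.Adj u v → ∃ i, u ∈ S i ∧ v ∈ S i) ∧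
  (∀ v, (T.induce {i | v ∈ S i}).Connected)

/-- The weak tree-width: minimum over weak tree-decompositions of the maximum
part size. -/
noncomputable def weakTreeWidth {V : Type*} (G : SimpleGraph V) : ℕ :=
  sInf {k | ∃ (I : Type) (_ : Fintype I) (T : SimpleGraph I) (S : I → Set V),
    IsWeakTreeDecomp G T S ∧ ∀ i, (S i).ncard ≤ k}

/-- The tree-width: minimum over tree-decompositions of the maximum bag size
minus one. -/
noncomputable def treeWidth {V : Type*} (G : SimpleGraph V) : ℕ :=
  sInf {k | ∃ (I : Type) (_ : Fintype I) (T : SimpleGraph I) (S : I → Set V),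
    IsTreeDecomp G T S ∧ ∀ i, (S i).ncard ≤ k + 1}


/-!
Root the tree and let `p i` be the parent of `i` (the root being its own parent). Every tree
edge joins a node to its parent, so enlarging each part `S i` to `S i ∪ S (p i)` puts every edge
of `G` into a single bag, at most doubles the bag sizes, and keeps the nodes whose bags contain a
vertex `v` connected: those added are children of nodes whose part contains `v`. The `+ 1`
is absorbed because `wtw ≥ 1` as soon as `G` has a vertex.
-/

open SimpleGraph

namespace SimpleGraph

variable {I : Type*} {T : SimpleGraph I}

lemma IsTree.exists_parent (hT : T.IsTree) :
    ∃ p : I → I, (∀ i, p i = i ∨ T.Adj i (p i)) ∧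
      ∀ ⦃i j⦄, T.Adj i j → p i = j ∨ p j = i := by
  classical
  obtain ⟨r⟩ := hT.connected.nonempty
  let P : ∀ i, T.Path r i := fun i => (hT.connected r i).some.toPath
  refine ⟨fun i => (P i).1.penultimate, fun i => ?_, fun i j hij => ?_⟩
  · by_cases hnil : (P i).1.Nil
    · left
      cases hnil.eq
      show (P r).1.penultimate = r
      rw [Walk.eq_nil_iff_nil.mpr hnil, Walk.penultimate_nil]
    · exact Or.inr (Walk.adj_penultimate hnil).symm
  · by_cases hi : i ∈ (P j).1.support
    · exact Or.inr (hT.isAcyclic.eq_penultimate_of_adj_end (P j).2 hij.symm hi).symm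
    · have hj :=
        hT.isAcyclic.mem_support_of_ne_mem_support_of_adj_of_isPath (P i).2 (P j).2 hij hi
      exact Or.inl (hT.isAcyclic.eq_penultimate_of_adj_end (P i).2 hij hj).symm

lemma induce_union_preimage_connected {A : Set I} (hA : (T.induce A).Connected) {p : I → I}
    (hp : ∀ i, p i = i ∨ T.Adj i (p i)) : (T.induce (A ∪ p ⁻¹' A)).Connected := by
  obtain ⟨⟨a, ha⟩⟩ := hA.nonempty
  refine induce_connected_of_patches a (Or.inl ha) fun {i} hi => ?_
  by_cases hiA : i ∈ A
  · exact ⟨A, Set.subset_union_left, ha, hiA, hA.preconnected _ _⟩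
  have hpi : p i ∈ A := hi.resolve_left hiA
  have hadj : T.Adj i (p i) := (hp i).resolve_left fun h => hiA (h ▸ hpi)
  have hpatch : (T.induce (A ∪ {i, p i})).Connected :=
    induce_union_connected hA.preconnected (induce_pair_connected_of_adj hadj).preconnected
      ⟨p i, hpi, by simp⟩
  refine ⟨A ∪ {i, p i}, ?_, Or.inl ha, Or.inr (by simp), hpatch.preconnected _ _⟩
  rintro j (hj | rfl | rfl)
  exacts [Or.inl hj, hi, Or.inl hpi]

end SimpleGraph

section

variable {V I : Type*} {G : SimpleGraph V} {T : SimpleGraph I} {S : I → Set V}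

theorem IsWeakTreeDecomp.isTreeDecomp_union_parent (h : IsWeakTreeDecomp G T S) {p : I → I}
    (hp : ∀ i, p i = i ∨ T.Adj i (p i))
    (hpT : ∀ ⦃i j⦄, T.Adj i j → p i = j ∨ p j = i) :
    IsTreeDecomp G T fun i => S i ∪ S (p i) := by
  obtain ⟨hT, hcover, hedge, hconn⟩ := h
  refine ⟨hT, fun v => ?_, fun u v huv => ?_, fun v => ?_⟩
  · obtain ⟨i, hi⟩ := hcover v
    exact ⟨i, Or.inl hi⟩
  · obtain ⟨i, j, hij, hu, hv⟩ := hedge huv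
    rcases hpT hij with rfl | rfl
    · exact ⟨i, hu, hv⟩
    · exact ⟨j, hu.symm, hv.symm⟩
  · exact induce_union_preimage_connected (hconn v) hp

theorem IsWeakTreeDecomp.exists_isTreeDecomp_ncard_le_two_mul (h : IsWeakTreeDecomp G T S)
    {k : ℕ} (hS : ∀ i, (S i).ncard ≤ k) :
    ∃ S' : I → Set V, IsTreeDecomp G T S' ∧ ∀ i, (S' i).ncard ≤ 2 * k := by
  obtain ⟨p, hp, hpT⟩ := h.1.exists_parent
  refine ⟨_, h.isTreeDecomp_union_parent hp hpT, fun i => ?_⟩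
  calc (S i ∪ S (p i)).ncard ≤ (S i).ncard + (S (p i)).ncard := Set.ncard_union_le _ _
    _ ≤ 2 * k := by linarith [hS i, hS (p i)]

theorem isWeakTreeDecomp_top_univ (G : SimpleGraph V) :
    IsWeakTreeDecomp G (⊤ : SimpleGraph Bool) fun _ => Set.univ := by
  refine ⟨⟨connected_top, .of_card_le_two (by simp)⟩, fun _ => ⟨true, trivial⟩,
    fun _ _ _ => ⟨true, false, by simp, Or.inl trivial, Or.inl trivial⟩, fun _ => ?_⟩
  rw [induce_top, connected_top_iff]
  exact ⟨⟨true, trivial⟩⟩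

theorem exists_isWeakTreeDecomp_ncard_le_weakTreeWidth [Finite V] (G : SimpleGraph V) :
    ∃ (I : Type) (_ : Fintype I) (T : SimpleGraph I) (S : I → Set V),
      IsWeakTreeDecomp G T S ∧ ∀ i, (S i).ncard ≤ weakTreeWidth G :=
  Nat.sInf_mem (s := {k | ∃ (I : Type) (_ : Fintype I) (T : SimpleGraph I) (S : I → Set V),
    IsWeakTreeDecomp G T S ∧ ∀ i, (S i).ncard ≤ k})
    ⟨Nat.card V, Bool, inferInstance, ⊤, _, isWeakTreeDecomp_top_univ G,
      fun _ => (Set.ncard_univ V).le⟩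

theorem treeWidth_le_of_isTreeDecomp {I : Type} [Fintype I] {T : SimpleGraph I}
    {S : I → Set V} (h : IsTreeDecomp G T S) {k : ℕ}
    (hS : ∀ i, (S i).ncard ≤ k + 1) : treeWidth G ≤ k :=
  Nat.sInf_le ⟨I, inferInstance, T, S, h, hS⟩

end

/-- `2·wtw(G) ≥ tw(G) + 1`. -/
theorem treeWidth_add_one_le_two_mul_weakTreeWidth {V : Type*} [Fintype V]
    (G : SimpleGraph V) (hG : G.Connected) :
    treeWidth G + 1 ≤ 2 * weakTreeWidth G := by
  obtain ⟨I, _, T, S, hS, hcard⟩ := exists_isWeakTreeDecomp_ncard_le_weakTreeWidth G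
  obtain ⟨v⟩ := hG.nonempty
  obtain ⟨i, hvi⟩ := hS.2.1 v
  have hwtw_pos : 0 < weakTreeWidth G :=
    ((Set.ncard_pos (Set.toFinite _)).mpr ⟨v, hvi⟩).trans_le (hcard i)
  obtain ⟨S', hS', hcard'⟩ := hS.exists_isTreeDecomp_ncard_le_two_mul hcard
  have := treeWidth_le_of_isTreeDecomp hS' (k := 2 * weakTreeWidth G - 1)
    fun i => (hcard' i).trans (by omega)
  omega
end

section
/- If (T, S) is a weak tree-decomposition of G rooted at a node r, and Y_r = S_r and Y_i = S_i ∪ S_{p(i)} for every non-root node i with parent p(i), then (T, {Y_i}) is a tree-decomposition of G. -/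
/-!
Rooted at `r`, every edge of the tree `T` joins a node to its parent, so an edge of `G` covered by
`S i ∪ S j` for a tree edge `ij` lies in the new bag of the child. A node whose new bag contains `v`
but whose old bag does not is adjacent to its parent, whose old bag contains `v`; attaching such
pendant nodes to the connected subtree `{i | v ∈ S i}` keeps it connected.
-/

namespace SimpleGraph

variable {V : Type*} {G : SimpleGraph V}

lemma Connected.induce_of_forall_adj {A B : Set V} (hA : (G.induce A).Connected) (hAB : A ⊆ B)
    (hB : ∀ b ∈ B, b ∉ A → ∃ a ∈ A, G.Adj b a) : (G.induce B).Connected := by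
  obtain ⟨⟨u, hu⟩⟩ := hA.nonempty
  refine induce_connected_of_patches u (hAB hu) fun {v} hv => ?_
  by_cases hvA : v ∈ A
  · exact ⟨A, hAB, hu, hvA, hA.preconnected _ _⟩
  obtain ⟨a, ha, hva⟩ := hB v hv hvA
  refine ⟨insert v A, Set.insert_subset hv hAB, .inr hu, .inl rfl, ?_⟩
  have hua : (G.induce (insert v A)).Reachable ⟨u, .inr hu⟩ ⟨a, .inr ha⟩ :=
    (hA.preconnected ⟨u, hu⟩ ⟨a, ha⟩).map (induceHomOfLE G (Set.subset_insert v A)).toHom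
  exact hua.trans (Adj.reachable (G := G.induce (insert v A)) hva.symm)

lemma IsTree.eq_of_adj_of_dist_add_one_eq (hG : G.IsTree) {r u w w' : V}
    (hw : G.Adj u w) (hw' : G.Adj u w') (hd : G.dist w r + 1 = G.dist u r)
    (hd' : G.dist w' r + 1 = G.dist u r) : w = w' := by
  obtain ⟨q, hq⟩ := hG.connected.exists_walk_length_eq_dist w r
  obtain ⟨q', hq'⟩ := hG.connected.exists_walk_length_eq_dist w' r
  have hpath : (Walk.cons hw q).IsPath := Walk.isPath_of_length_eq_dist _ (by simp [hq, hd])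
  have hpath' : (Walk.cons hw' q').IsPath := Walk.isPath_of_length_eq_dist _ (by simp [hq', hd'])
  have := (hG.existsUnique_path u r).unique hpath hpath'
  simpa using congrArg Walk.snd this

lemma IsTree.eq_parent_or_eq_parent_of_adj (hG : G.IsTree) {r : V} {p : V → V}
    (hp : ∀ i, i ≠ r → G.Adj i (p i) ∧ G.dist (p i) r + 1 = G.dist i r) {i j : V}
    (hij : G.Adj i j) : (i ≠ r ∧ j = p i) ∨ (j ≠ r ∧ i = p j) := by
  have eq_parent {i j : V} (hij : G.Adj i j) (hd : G.dist r i = G.dist r j + 1) :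
      i ≠ r ∧ j = p i := by
    have hir : i ≠ r := by rintro rfl; simp at hd
    refine ⟨hir, hG.eq_of_adj_of_dist_add_one_eq hij (hp i hir).1 ?_ (hp i hir).2⟩
    rw [dist_comm, dist_comm (u := i), hd]
  rcases hG.dist_eq_dist_add_one_of_adj r hij with hd | hd
  · exact .inl (eq_parent hij hd)
  · exact .inr (eq_parent hij.symm hd)

end SimpleGraph

theorem weakTreeDecomp_to_treeDecomp_general {V I : Type*}
    [DecidableEq I] (G : SimpleGraph V) (T : SimpleGraph I)
    (S : I → Set V) (h : IsWeakTreeDecomp G T S) (r : I) (p : I → I)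
    (hp : ∀ i, i ≠ r → T.Adj i (p i) ∧ T.dist (p i) r + 1 = T.dist i r) :
    IsTreeDecomp G T (fun i => if i = r then S r else S i ∪ S (p i)) := by
  obtain ⟨hT, hcover, hedge, hconn⟩ := h
  set Y : I → Set V := fun i => if i = r then S r else S i ∪ S (p i)
  have hY {i : I} (hir : i ≠ r) : Y i = S i ∪ S (p i) := if_neg hir
  have hSY (i : I) : S i ⊆ Y i := by
    by_cases hir : i = r
    · simp [Y, hir]
    · simp [hY hir]
  refine ⟨hT, fun v => ?_, fun u v huv => ?_, fun v => ?_⟩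
  · obtain ⟨i, hi⟩ := hcover v
    exact ⟨i, hSY i hi⟩
  · obtain ⟨i, j, hij, hu, hv⟩ := hedge huv
    rcases hT.eq_parent_or_eq_parent_of_adj hp hij with ⟨hir, rfl⟩ | ⟨hjr, rfl⟩
    · exact ⟨i, hY hir ▸ hu, hY hir ▸ hv⟩
    · rw [Set.union_comm] at hu hv
      exact ⟨j, hY hjr ▸ hu, hY hjr ▸ hv⟩
  · refine (hconn v).induce_of_forall_adj (fun i hi => hSY i hi) fun i hi hiS => ?_
    have hir : i ≠ r := by
      rintro rfl
      exact hiS (by simpa [Y] using hi)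
    have hi' : v ∈ S i ∪ S (p i) := hY hir ▸ hi
    exact ⟨p i, hi'.resolve_left hiS, (hp i hir).1⟩

/-- rooting a weak tree-decomposition at `r` and replacing each
non-root bag `S i` by `S i ∪ S (p i)` (where `p i` is the parent of `i`, i.e.
the neighbour of `i` one step closer to `r`) yields a tree-decomposition. -/
theorem weakTreeDecomp_to_treeDecomp {V I : Type*} [Fintype V] [Fintype I]
    [DecidableEq I] (G : SimpleGraph V) (hG : G.Connected) (T : SimpleGraph I)
    (S : I → Set V) (h : IsWeakTreeDecomp G T S) (r : I) (p : I → I)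
    (hp : ∀ i, i ≠ r → T.Adj i (p i) ∧ T.dist (p i) r + 1 = T.dist i r) :
    IsTreeDecomp G T (fun i => if i = r then S r else S i ∪ S (p i)) :=
  weakTreeDecomp_to_treeDecomp_general G T S h r p hp
end

section
/- Let G be a finite connected graph on n vertices with maximum degree d_max, and let λ₁ be the smallest nonzero eigenvalue of the graph Laplacian. Then tw(G) + 1 ≥ n·λ₁ / (12·d_max). -/
open Finset

/-- Dirichlet energy of `f`: sum of `(f u - f v)²` over the edges of `G`. -/
noncomputable def edgeEnergy {V : Type*} [Fintype V] [DecidableEq V]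
    (G : SimpleGraph V) [DecidableRel G.Adj] (f : V → ℝ) : ℝ :=
  ∑ e ∈ G.edgeFinset,
    Sym2.lift ⟨fun u v => (f u - f v) ^ 2, fun u v => by ring⟩ e

/-- The smallest nonzero Laplacian eigenvalue, via the variational
characterization over mean-zero test functions. -/
noncomputable def lambdaOne {V : Type*} [Fintype V] [DecidableEq V]
    (G : SimpleGraph V) [DecidableRel G.Adj] : ℝ :=
  sInf {r | ∃ f : V → ℝ, (∑ v, f v) = 0 ∧ f ≠ 0 ∧
    r = edgeEnergy G f / ∑ v, (f v) ^ 2}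

/-!
A tree decomposition of width `k` has a centroid bag `X`, with `#X ≤ k + 1`, such that every
branch of the tree at `X` carries at most `n / 2` vertices. When `n ≥ 3 (k + 1)` the branches can
be grouped into two non-adjacent vertex sets `A`, `B` separated by `X` with `#A, #B ≥ n / 12`.
The mean-zero test function `#B • 𝟙_A - #A • 𝟙_B` has energy only on the at most
`(k + 1) d_max` edges at `X`, which gives `λ₁ · min #A #B ≤ (k + 1) d_max`. When
`n < 3 (k + 1)`, the test function `𝟙_a - 𝟙_b` gives `λ₁ ≤ 4 d_max` instead.
-/

namespace SimpleGraph

variable {I : Type*} {T : SimpleGraph I} {i j j' z l l' : I}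

def side (T : SimpleGraph I) (i j : I) : Set I :=
  {l | (T.deleteEdges {s(i, j)}).Reachable j l}

lemma self_mem_side : j ∈ T.side i j := Reachable.refl j

lemma not_mem_side (hT : T.IsAcyclic) (hij : T.Adj i j) : i ∉ T.side i j := fun h =>
  isBridge_iff.mp (isAcyclic_iff_forall_adj_isBridge.mp hT hij) h.symm

lemma mem_edges_of_mem_side_of_not_mem_side {H : SimpleGraph I} (hH : H ≤ T) {x y : I}
    (p : H.Walk x y) (hx : x ∈ T.side i j) (hy : y ∉ T.side i j) : s(i, j) ∈ p.edges := by
  by_contra hp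
  refine hy (hx.trans ⟨p.transfer _ fun e he => ?_⟩)
  rw [edgeSet_deleteEdges]
  exact ⟨edgeSet_mono hH (p.edges_subset_edgeSet he), fun h => hp (h ▸ he)⟩

lemma disjoint_side_swap (hT : T.IsAcyclic) (hij : T.Adj i j) :
    Disjoint (T.side i j) (T.side j i) := by
  refine Set.disjoint_left.mpr fun l hl hl' => not_mem_side hT hij ?_
  have hl' : (T.deleteEdges {s(i, j)}).Reachable i l := by rwa [Sym2.eq_swap]
  exact hl.trans hl'.symm

lemma side_ssubset_side (hT : T.IsAcyclic) (hij : T.Adj i j) (hjz : T.Adj j z) (hzi : z ≠ i) :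
    T.side j z ⊂ T.side i j := by
  classical
  have hz : z ∈ T.side i j := by
    refine (deleteEdges_adj.mpr ⟨hjz, ?_⟩).reachable
    rw [Set.mem_singleton_iff, Sym2.eq_iff]
    rintro (⟨rfl, -⟩ | ⟨-, rfl⟩)
    exacts [hij.ne rfl, hzi rfl]
  refine ⟨fun l ⟨p⟩ => ?_, fun h => not_mem_side hT hjz (h self_mem_side)⟩
  by_contra hl
  have hj := p.snd_mem_support_of_mem_edges
    (mem_edges_of_mem_side_of_not_mem_side (deleteEdges_le _) p hz hl)
  exact not_mem_side hT hjz ⟨p.takeUntil j hj⟩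

lemma disjoint_side_of_ne (hT : T.IsAcyclic) (hij : T.Adj i j) (hij' : T.Adj i j')
    (hjj' : j ≠ j') : Disjoint (T.side i j) (T.side i j') :=
  (disjoint_side_swap hT hij).mono_right (side_ssubset_side hT hij.symm hij' hjj'.symm).subset

lemma exists_adj_mem_side (hT : T.Connected) (hl : l ≠ i) : ∃ j, T.Adj i j ∧ l ∈ T.side i j := by
  classical
  obtain ⟨p, hp⟩ := (hT.preconnected i l).some.toPath
  cases p with
  | nil => exact absurd rfl hl
  | @cons _ j _ hij q =>
    rw [Walk.cons_isPath_iff] at hp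
    refine ⟨j, hij, ⟨q.transfer _ fun e he => ?_⟩⟩
    rw [edgeSet_deleteEdges]
    refine ⟨q.edges_subset_edgeSet he, fun h => hp.2 ?_⟩
    rw [Set.mem_singleton_iff] at h
    exact q.fst_mem_support_of_mem_edges (h ▸ he)

lemma mem_of_induce_connected_of_mem_side {P : Set I} (hP : (T.induce P).Connected) (hl : l ∈ P)
    (hl' : l' ∈ P) (h : l ∈ T.side i j) (h' : l' ∉ T.side i j) : i ∈ P ∧ j ∈ P := by
  obtain ⟨p⟩ := hP.preconnected ⟨l, hl⟩ ⟨l', hl'⟩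
  set q := p.map (Embedding.induce P).toHom
  have hij := mem_edges_of_mem_side_of_not_mem_side le_rfl q h h'
  have hsupp : ∀ x ∈ q.support, x ∈ P := by
    intro x hx
    obtain ⟨y, -, rfl⟩ := List.mem_map.mp ((Walk.support_map _ _) ▸ hx)
    exact y.2
  exact ⟨hsupp _ (q.fst_mem_support_of_mem_edges hij), hsupp _ (q.snd_mem_support_of_mem_edges hij)⟩

end SimpleGraph

open SimpleGraph

lemma exists_balanced_split {ι : Type*} [DecidableEq ι] (s : Finset ι) (a : ι → ℕ) (n : ℕ)
    (ha : ∀ j ∈ s, 2 * a j ≤ n) (hs : 2 * n ≤ 3 * ∑ j ∈ s, a j) :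
    ∃ F ⊆ s, n ≤ 12 * ∑ j ∈ F, a j ∧ n ≤ 12 * ∑ j ∈ s \ F, a j := by
  obtain ⟨F, hF, hmin⟩ := (s.powerset.filter fun F => n ≤ 12 * ∑ j ∈ F, a j).exists_min_image
    card ⟨s, mem_filter.mpr ⟨mem_powerset_self s, by omega⟩⟩
  rw [mem_filter, mem_powerset] at hF
  refine ⟨F, hF.1, hF.2, ?_⟩
  have hsplit := sum_sdiff hF.1 (f := a)
  suffices 12 * ∑ j ∈ F, a j ≤ 7 * n by omega
  rcases F.eq_empty_or_nonempty with rfl | ⟨j, hj⟩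
  · simp
  -- `F` is a smallest heavy group, so dropping `j` makes it light
  have hlight : ¬ n ≤ 12 * ∑ x ∈ F.erase j, a x := fun h => by
    have := hmin _ (mem_filter.mpr ⟨mem_powerset.mpr ((erase_subset _ _).trans hF.1), h⟩)
    have := card_erase_lt_of_mem hj
    omega
  have := sum_erase_add F a hj
  have := ha j (hF.1 hj)
  omega

section TreeDecomp

variable {V I : Type*} [Fintype V] {G : SimpleGraph V} {T : SimpleGraph I} {S : I → Set V}
  {i j j' : I}

noncomputable def bagBranch (T : SimpleGraph I) (S : I → Set V) (i j : I) : Finset V := by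
  classical exact {v | ∀ l, v ∈ S l → l ∈ T.side i j}

lemma mem_bagBranch {v : V} : v ∈ bagBranch T S i j ↔ ∀ l, v ∈ S l → l ∈ T.side i j := by
  simp [bagBranch]

namespace IsTreeDecomp

lemma disjoint_bagBranch_swap (hD : IsTreeDecomp G T S) (hij : T.Adj i j) :
    Disjoint (bagBranch T S i j) (bagBranch T S j i) := by
  refine disjoint_left.mpr fun v hv hv' => ?_
  obtain ⟨l, hl⟩ := hD.2.1 v
  exact Set.disjoint_left.mp (disjoint_side_swap hD.1.isAcyclic hij)
    (mem_bagBranch.mp hv l hl) (mem_bagBranch.mp hv' l hl)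

lemma disjoint_bagBranch_of_ne (hD : IsTreeDecomp G T S) (hij : T.Adj i j) (hij' : T.Adj i j')
    (hjj' : j ≠ j') : Disjoint (bagBranch T S i j) (bagBranch T S i j') := by
  refine disjoint_left.mpr fun v hv hv' => ?_
  obtain ⟨l, hl⟩ := hD.2.1 v
  exact Set.disjoint_left.mp (disjoint_side_of_ne hD.1.isAcyclic hij hij' hjj')
    (mem_bagBranch.mp hv l hl) (mem_bagBranch.mp hv' l hl)

lemma not_adj_of_mem_bagBranch (hD : IsTreeDecomp G T S) (hij : T.Adj i j) (hij' : T.Adj i j')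
    (hjj' : j ≠ j') {u w : V} (hu : u ∈ bagBranch T S i j) (hw : w ∈ bagBranch T S i j') :
    ¬ G.Adj u w := fun huw => by
  obtain ⟨l, hul, hwl⟩ := hD.2.2.1 huw
  exact Set.disjoint_left.mp (disjoint_side_of_ne hD.1.isAcyclic hij hij' hjj')
    (mem_bagBranch.mp hu l hul) (mem_bagBranch.mp hw l hwl)

lemma exists_mem_bagBranch (hD : IsTreeDecomp G T S) {v : V} (hv : v ∉ S i) :
    ∃ j, T.Adj i j ∧ v ∈ bagBranch T S i j := by
  obtain ⟨l, hl⟩ := hD.2.1 v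
  have hli : l ≠ i := by rintro rfl; exact hv hl
  obtain ⟨j, hij, hlj⟩ := exists_adj_mem_side hD.1.connected hli
  refine ⟨j, hij, mem_bagBranch.mpr fun l' hl' => ?_⟩
  by_contra hl'j
  exact hv (mem_of_induce_connected_of_mem_side (hD.2.2.2 v) hl hl' hlj
    hl'j).1

lemma exists_centroid [Fintype I] (hD : IsTreeDecomp G T S) :
    ∃ i, ∀ j, T.Adj i j → 2 * #(bagBranch T S i j) ≤ Fintype.card V := by
  classical
  by_contra! hbig
  have : Nonempty I := hD.1.connected.nonempty
  let heavy : Finset (I × I) :=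
    {p | T.Adj p.1 p.2 ∧ Fintype.card V < 2 * #(bagBranch T S p.1 p.2)}
  obtain ⟨j₀, hj₀⟩ := hbig (Classical.arbitrary I)
  obtain ⟨⟨i, j⟩, hmem, hmin⟩ := heavy.exists_min_image (fun p => (T.side p.1 p.2).ncard)
    ⟨(_, j₀), mem_filter.mpr ⟨mem_univ _, hj₀⟩⟩
  simp only [heavy, mem_filter, mem_univ, true_and] at hmem
  obtain ⟨hij, hij_big⟩ := hmem
  obtain ⟨z, hjz, hjz_big⟩ := hbig j
  by_cases hzi : z = i
  · subst hzi
    have := card_union_of_disjoint (disjoint_bagBranch_swap hD hij)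
    have := card_le_univ (bagBranch T S z j ∪ bagBranch T S j z)
    omega
  · have hle := hmin (j, z) (mem_filter.mpr ⟨mem_univ _, hjz, hjz_big⟩)
    have hlt := Set.ncard_lt_ncard (side_ssubset_side hD.1.isAcyclic hij hjz hzi)
      (Set.toFinite _)
    exact absurd hle (not_le.mpr hlt)

lemma univ_sdiff_biUnion_bagBranch_subset [DecidableEq V] [Fintype I] [DecidableRel T.Adj]
    (hD : IsTreeDecomp G T S) (i : I) :
    univ \ ({j | T.Adj i j} : Finset I).biUnion (bagBranch T S i) ⊆ (S i).toFinite.toFinset := by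
  intro v hv
  rw [Set.Finite.mem_toFinset]
  by_contra hvi
  obtain ⟨j, hij, hvj⟩ := hD.exists_mem_bagBranch hvi
  exact (mem_sdiff.mp hv).2 (mem_biUnion.mpr ⟨j, mem_filter.mpr ⟨mem_univ _, hij⟩, hvj⟩)

lemma exists_balanced_separation [DecidableEq V] [Fintype I] (hD : IsTreeDecomp G T S) {k : ℕ}
    (hk : ∀ i, (S i).ncard ≤ k + 1) (hn : 3 * (k + 1) ≤ Fintype.card V) :
    ∃ A B : Finset V, Disjoint A B ∧ (∀ u ∈ A, ∀ v ∈ B, ¬ G.Adj u v) ∧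
      #(univ \ (A ∪ B)) ≤ k + 1 ∧ Fintype.card V ≤ 12 * #A ∧ Fintype.card V ≤ 12 * #B := by
  classical
  obtain ⟨i, hi⟩ := hD.exists_centroid
  set N : Finset I := {j | T.Adj i j}
  have hN : ∀ j ∈ N, T.Adj i j := fun j hj => (mem_filter.mp hj).2
  have hdisj : (N : Set I).PairwiseDisjoint (bagBranch T S i) := fun j hj j' hj' hne =>
    hD.disjoint_bagBranch_of_ne (hN j hj) (hN j' hj') hne
  have hbag : #(univ \ N.biUnion (bagBranch T S i)) ≤ k + 1 :=
    (card_le_card (hD.univ_sdiff_biUnion_bagBranch_subset i)).trans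
      ((Set.ncard_eq_toFinset_card _ _).symm.trans_le (hk i))
  have htotal : Fintype.card V ≤ k + 1 + ∑ j ∈ N, #(bagBranch T S i j) := by
    rw [← card_biUnion hdisj, ← card_univ]
    exact card_le_card_sdiff_add_card.trans (Nat.add_le_add_right hbag _)
  obtain ⟨F, hFN, hFA, hFB⟩ := exists_balanced_split N (fun j => #(bagBranch T S i j)) _
    (fun j hj => hi j (hN j hj)) (by omega)
  refine ⟨F.biUnion (bagBranch T S i), (N \ F).biUnion (bagBranch T S i), ?_, ?_, ?_, ?_, ?_⟩
  · refine (disjoint_biUnion_left _ _ _).mpr fun j hj =>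
      (disjoint_biUnion_right _ _ _).mpr fun j' hj' => ?_
    exact hdisj (hFN hj) (sdiff_subset hj') (by rintro rfl; exact (mem_sdiff.mp hj').2 hj)
  · intro u hu v hv
    obtain ⟨j, hj, huj⟩ := mem_biUnion.mp hu
    obtain ⟨j', hj', hvj'⟩ := mem_biUnion.mp hv
    exact hD.not_adj_of_mem_bagBranch (hN j (hFN hj)) (hN j' (sdiff_subset hj'))
      (by rintro rfl; exact (mem_sdiff.mp hj').2 hj) huj hvj'
  · refine (card_le_card (sdiff_subset_sdiff subset_rfl ?_)).trans hbag
    rw [← union_biUnion, union_sdiff_of_subset hFN]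
  · rwa [card_biUnion (hdisj.subset hFN)]
  · rwa [card_biUnion (hdisj.subset sdiff_subset)]

end IsTreeDecomp

end TreeDecomp

section CutFunction

variable {V : Type*} [DecidableEq V] {A B : Finset V} {v : V}

def cutFunction (A B : Finset V) (v : V) : ℝ :=
  if v ∈ A then #B else if v ∈ B then -#A else 0

lemma cutFunction_of_mem_left (hv : v ∈ A) : cutFunction A B v = #B := if_pos hv

lemma cutFunction_of_mem_right (hAB : Disjoint A B) (hv : v ∈ B) : cutFunction A B v = -#A := by
  rw [cutFunction, if_neg (disjoint_right.mp hAB hv), if_pos hv]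

lemma cutFunction_of_not_mem (hA : v ∉ A) (hB : v ∉ B) : cutFunction A B v = 0 := by
  rw [cutFunction, if_neg hA, if_neg hB]

lemma sq_cutFunction_le (hAB : Disjoint A B) (v : V) :
    cutFunction A B v ^ 2 ≤ max (#A : ℝ) #B ^ 2 := by
  by_cases hA : v ∈ A
  · rw [cutFunction_of_mem_left hA]
    exact pow_le_pow_left₀ (Nat.cast_nonneg _) (le_max_right _ _) 2
  by_cases hB : v ∈ B
  · rw [cutFunction_of_mem_right hAB hB, neg_sq]
    exact pow_le_pow_left₀ (Nat.cast_nonneg _) (le_max_left _ _) 2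
  rw [cutFunction_of_not_mem hA hB, zero_pow two_ne_zero]
  exact sq_nonneg _

variable [Fintype V]

lemma sum_comp_cutFunction (hAB : Disjoint A B) (g : ℝ → ℝ) (hg : g 0 = 0) :
    ∑ v, g (cutFunction A B v) = #A * g #B + #B * g (-#A) := by
  have hA : ∑ v ∈ A, g (cutFunction A B v) = #A * g #B := by
    rw [sum_congr rfl fun v hv => congrArg g (cutFunction_of_mem_left hv), sum_const,
      nsmul_eq_mul]
  have hB : ∑ v ∈ B, g (cutFunction A B v) = #B * g (-#A) := by
    rw [sum_congr rfl fun v hv => congrArg g (cutFunction_of_mem_right hAB hv), sum_const,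
      nsmul_eq_mul]
  rw [← sum_subset (subset_univ (A ∪ B)), sum_union hAB, hA, hB]
  intro v _ hv
  rw [mem_union, not_or] at hv
  rw [cutFunction_of_not_mem hv.1 hv.2, hg]

lemma sum_cutFunction (hAB : Disjoint A B) : ∑ v, cutFunction A B v = 0 := by
  have := sum_comp_cutFunction hAB id rfl
  simp only [id] at this
  rw [this]
  ring

lemma sum_sq_cutFunction (hAB : Disjoint A B) :
    ∑ v, cutFunction A B v ^ 2 = #A * #B * (#A + #B) := by
  rw [sum_comp_cutFunction hAB (· ^ 2) (zero_pow two_ne_zero)]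
  ring

end CutFunction

section Spectral

variable {V : Type*} [Fintype V] [DecidableEq V] (G : SimpleGraph V) [DecidableRel G.Adj]

lemma edgeEnergy_nonneg (f : V → ℝ) : 0 ≤ edgeEnergy G f :=
  sum_nonneg fun e _ => e.inductionOn fun _ _ => sq_nonneg _

lemma lambdaOne_nonneg : 0 ≤ lambdaOne G :=
  Real.sInf_nonneg <| by
    rintro _ ⟨f, -, -, rfl⟩
    exact div_nonneg (edgeEnergy_nonneg G f) (sum_nonneg fun _ _ => sq_nonneg _)

lemma lambdaOne_eq_zero_of_subsingleton [Subsingleton V] : lambdaOne G = 0 := by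
  refine (congrArg sInf (Set.eq_empty_iff_forall_notMem.mpr ?_)).trans Real.sInf_empty
  rintro _ ⟨f, hf, hne, -⟩
  exact hne (funext fun v => by rwa [Fintype.sum_subsingleton f v] at hf)

lemma lambdaOne_mul_sum_sq_le {f : V → ℝ} (hf : ∑ v, f v = 0) :
    lambdaOne G * ∑ v, f v ^ 2 ≤ edgeEnergy G f := by
  rcases eq_or_ne f 0 with rfl | hne
  · simpa using edgeEnergy_nonneg G 0
  obtain ⟨v, hv⟩ := Function.ne_iff.mp hne
  have hpos : 0 < ∑ v, f v ^ 2 :=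
    sum_pos' (fun _ _ => sq_nonneg _) ⟨v, mem_univ v, sq_pos_of_ne_zero hv⟩
  rw [← le_div_iff₀ hpos]
  refine csInf_le ⟨0, ?_⟩ ⟨f, hf, hne, rfl⟩
  rintro _ ⟨g, -, -, rfl⟩
  exact div_nonneg (edgeEnergy_nonneg G g) (sum_nonneg fun _ _ => sq_nonneg _)

lemma card_edgeFinset_filter_mem_le (R : Finset V) :
    #{e ∈ G.edgeFinset | ∃ r ∈ R, r ∈ e} ≤ #R * G.maxDegree := by
  calc #{e ∈ G.edgeFinset | ∃ r ∈ R, r ∈ e}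
      ≤ #(R.biUnion fun r => G.incidenceFinset r) := card_le_card fun e he => by
        obtain ⟨he, r, hr, hre⟩ := mem_filter.mp he
        exact mem_biUnion.mpr ⟨r, hr, (G.mem_incidenceFinset r e).mpr ⟨mem_edgeFinset.mp he, hre⟩⟩
    _ ≤ ∑ r ∈ R, #(G.incidenceFinset r) := card_biUnion_le
    _ ≤ ∑ _r ∈ R, G.maxDegree := sum_le_sum fun r _ => by
        rw [card_incidenceFinset_eq_degree]
        exact G.degree_le_maxDegree r
    _ = #R * G.maxDegree := by rw [sum_const, smul_eq_mul]

lemma edgeEnergy_le_card_mul_maxDegree_mul (R : Finset V) (f : V → ℝ) {M : ℝ} (hM : 0 ≤ M)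
    (hR : ∀ u v, G.Adj u v → u ∈ R → (f u - f v) ^ 2 ≤ M)
    (hoff : ∀ u v, G.Adj u v → u ∉ R → v ∉ R → f u = f v) :
    edgeEnergy G f ≤ #R * G.maxDegree * M := by
  calc edgeEnergy G f ≤ ∑ e ∈ G.edgeFinset with ∃ r ∈ R, r ∈ e, M := by
        rw [sum_filter]
        refine sum_le_sum fun e he => ?_
        induction e using Sym2.inductionOn with
        | hf u v =>
          have huv := mem_edgeFinset.mp he
          simp only [Sym2.lift_mk, Sym2.mem_iff]
          split_ifs with h
          · obtain ⟨r, hr, rfl | rfl⟩ := h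
            · exact hR _ _ huv hr
            · rw [← neg_sub, neg_sq]
              exact hR _ _ huv.symm hr
          · push Not at h
            rw [hoff u v huv (fun hu => (h u hu).1 rfl) (fun hv => (h v hv).2 rfl), sub_self]
            simp
    _ = #{e ∈ G.edgeFinset | ∃ r ∈ R, r ∈ e} * M := by rw [sum_const, nsmul_eq_mul]
    _ ≤ #R * G.maxDegree * M := by
        gcongr
        exact_mod_cast card_edgeFinset_filter_mem_le G R

variable {A B : Finset V}

lemma lambdaOne_le_four_mul_maxDegree : lambdaOne G ≤ 4 * G.maxDegree := by
  rcases subsingleton_or_nontrivial V with _ | _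
  · rw [lambdaOne_eq_zero_of_subsingleton]
    positivity
  obtain ⟨a, b, hab⟩ := exists_pair_ne V
  have hAB : Disjoint {a} {b} := disjoint_singleton.mpr hab
  have hlam := lambdaOne_mul_sum_sq_le G (sum_cutFunction hAB)
  have hsq := sq_cutFunction_le hAB
  simp only [sum_sq_cutFunction hAB, card_singleton, Nat.cast_one, max_self, one_pow] at hlam hsq
  have hE := edgeEnergy_le_card_mul_maxDegree_mul G ({a} ∪ {b}) (cutFunction {a} {b})
    (M := 4) (by norm_num)
    (fun u v _ _ => by nlinarith [hsq u, hsq v, sq_nonneg (cutFunction {a} {b} u +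
      cutFunction {a} {b} v)])
    (fun u v _ hu hv => by
      rw [mem_union, not_or] at hu hv
      rw [cutFunction_of_not_mem hu.1 hu.2, cutFunction_of_not_mem hv.1 hv.2])
  simp only [card_union_of_disjoint hAB, card_singleton] at hE
  push_cast at hE
  linarith

lemma edgeEnergy_cutFunction_le (hAB : Disjoint A B)
    (hAB_adj : ∀ u ∈ A, ∀ v ∈ B, ¬ G.Adj u v) :
    edgeEnergy G (cutFunction A B) ≤ #(univ \ (A ∪ B)) * G.maxDegree * max (#A : ℝ) #B ^ 2 := by
  refine edgeEnergy_le_card_mul_maxDegree_mul G _ _ (sq_nonneg _) (fun u v _ hu => ?_)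
    (fun u v huv hu hv => ?_)
  · rw [mem_sdiff, mem_union, not_or] at hu
    rw [cutFunction_of_not_mem hu.2.1 hu.2.2, zero_sub, neg_sq]
    exact sq_cutFunction_le hAB v
  simp only [mem_sdiff, mem_univ, true_and, not_not, mem_union] at hu hv
  rcases hu with hu | hu <;> rcases hv with hv | hv
  · rw [cutFunction_of_mem_left hu, cutFunction_of_mem_left hv]
  · exact absurd huv (hAB_adj u hu v hv)
  · exact absurd huv.symm (hAB_adj v hv u hu)
  · rw [cutFunction_of_mem_right hAB hu, cutFunction_of_mem_right hAB hv]

lemma lambdaOne_mul_min_card_le (hAB : Disjoint A B) (hAB_adj : ∀ u ∈ A, ∀ v ∈ B, ¬ G.Adj u v) :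
    lambdaOne G * min (#A : ℝ) #B ≤ #(univ \ (A ∪ B)) * G.maxDegree := by
  set m := max (#A : ℝ) #B
  have hE := edgeEnergy_cutFunction_le G hAB hAB_adj
  have hlam := lambdaOne_mul_sum_sq_le G (sum_cutFunction hAB)
  rw [sum_sq_cutFunction hAB] at hlam
  have hm : m ≤ #A + #B := max_le_add_of_nonneg (Nat.cast_nonneg _) (Nat.cast_nonneg _)
  rcases (show (0 : ℝ) ≤ m by positivity).eq_or_lt with hm0 | hm0
  · have : min (#A : ℝ) #B = 0 := le_antisymm (hm0 ▸ min_le_max) (by positivity)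
    rw [this, mul_zero]
    positivity
  refine le_of_mul_le_mul_right ?_ (pow_pos hm0 2)
  calc lambdaOne G * min (#A : ℝ) #B * m ^ 2
      = lambdaOne G * (min (#A : ℝ) #B * m) * m := by ring
    _ = lambdaOne G * (#A * #B) * m := by rw [min_mul_max]
    _ ≤ lambdaOne G * (#A * #B) * (#A + #B) := by
        gcongr
        exact mul_nonneg (lambdaOne_nonneg G) (by positivity)
    _ ≤ #(univ \ (A ∪ B)) * G.maxDegree * m ^ 2 := by linarith

end Spectral

lemma exists_isTreeDecomp_treeWidth {V : Type*} [Finite V] (G : SimpleGraph V) :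
    ∃ (I : Type) (_ : Fintype I) (T : SimpleGraph I) (S : I → Set V),
      IsTreeDecomp G T S ∧ ∀ i, (S i).ncard ≤ treeWidth G + 1 := by
  refine Nat.sInf_mem (s := {k | ∃ (I : Type) (_ : Fintype I) (T : SimpleGraph I)
    (S : I → Set V), IsTreeDecomp G T S ∧ ∀ i, (S i).ncard ≤ k + 1}) ⟨Nat.card V, ?_⟩
  refine ⟨Unit, inferInstance, ⊥, fun _ => Set.univ,
    ⟨.of_subsingleton, fun _ => ⟨(), trivial⟩, fun _ _ _ => ⟨(), trivial, trivial⟩, fun v => ?_⟩,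
    fun _ => (Set.ncard_univ V).trans_le (Nat.le_succ _)⟩
  have : Nonempty {_i : Unit | v ∈ (Set.univ : Set V)} := ⟨⟨(), trivial⟩⟩
  exact .of_subsingleton

theorem treeWidth_spectral_lower_bound_general {V : Type*} [Fintype V] [DecidableEq V]
    (G : SimpleGraph V) [DecidableRel G.Adj] :
    (Fintype.card V : ℝ) * lambdaOne G / (12 * G.maxDegree) ≤
      (treeWidth G : ℝ) + 1 := by
  obtain ⟨I, _, T, S, hD, hwidth⟩ := exists_isTreeDecomp_treeWidth G
  set k := treeWidth G
  have hlam := lambdaOne_nonneg G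
  -- this also covers `G.maxDegree = 0`, where the left side is the junk value `x / 0 = 0`
  refine div_le_of_le_mul₀ (by positivity) (by positivity) ?_
  rcases le_total (Fintype.card V) (3 * (k + 1)) with hsmall | hlarge
  · calc (Fintype.card V : ℝ) * lambdaOne G ≤ (3 * (k + 1) : ℕ) * (4 * G.maxDegree) := by
          gcongr
          exact lambdaOne_le_four_mul_maxDegree G
      _ = (k + 1) * (12 * G.maxDegree) := by push_cast; ring
  obtain ⟨A, B, hAB, hAB_adj, hsep, hA, hB⟩ := hD.exists_balanced_separation hwidth hlarge
  have hmin : (Fintype.card V : ℝ) ≤ 12 * min (#A : ℝ) #B := by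
    rw [mul_min_of_nonneg _ _ (by norm_num)]
    exact le_min (by exact_mod_cast hA) (by exact_mod_cast hB)
  calc (Fintype.card V : ℝ) * lambdaOne G ≤ 12 * min (#A : ℝ) #B * lambdaOne G :=
        mul_le_mul_of_nonneg_right hmin hlam
    _ = 12 * (lambdaOne G * min (#A : ℝ) #B) := by ring
    _ ≤ 12 * (#(univ \ (A ∪ B)) * G.maxDegree) :=
        mul_le_mul_of_nonneg_left (lambdaOne_mul_min_card_le G hAB hAB_adj) (by norm_num)
    _ ≤ 12 * ((k + 1) * G.maxDegree) := by
        gcongr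
        exact_mod_cast hsep
    _ = (k + 1) * (12 * G.maxDegree) := by ring

/-- Chandran–Subramanian: `tw(G) + 1 ≥ n·λ₁/(12·d_max)`. -/
theorem treeWidth_spectral_lower_bound {V : Type*} [Fintype V] [DecidableEq V]
    (G : SimpleGraph V) [DecidableRel G.Adj] (hG : G.Connected) :
    (Fintype.card V : ℝ) * lambdaOne G / (12 * G.maxDegree) ≤
      (treeWidth G : ℝ) + 1 :=
  treeWidth_spectral_lower_bound_general G
end

section
/- Let G = (V,E) be a finite graph, Y, Z ⊆ V disjoint and nonempty, and λ₁ the smallest nonzero Laplacian eigenvalue of G. Then λ₁ ≤ (|E| − |E(Y)| − |E(Z)|)·(1/|Y| + 1/|Z|), where E(A) denotes the set of edges with both endpoints in A. -/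
open Finset

/-- The edges of `G` with both endpoints in `A`. -/
def edgesWithin {V : Type*} (G : SimpleGraph V) (A : Set V) : Set (Sym2 V) :=
  {e | e ∈ G.edgeSet ∧ ∀ v ∈ e, v ∈ A}

/-!
Test the variational definition of `λ₁` with `f = 1_Y / |Y| - 1_Z / |Z|`. It has mean zero
and `‖f‖² = 1/|Y| + 1/|Z| =: c`. It is constant on `Y` and on `Z`, so edges inside either set
contribute nothing to the energy, and every other edge contributes at most `c²` because `f`
takes values in `[-1/|Z|, 1/|Y|]`.
Hence the Rayleigh quotient is at most `(|E| - |E(Y)| - |E(Z)|) · c² / c`.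
-/

namespace SimpleGraph

variable {V : Type*} (G : SimpleGraph V)

lemma edgesWithin_subset_edgeSet (A : Set V) : edgesWithin G A ⊆ G.edgeSet :=
  fun _ he => he.1

lemma disjoint_edgesWithin {Y Z : Set V} (hYZ : Disjoint Y Z) :
    Disjoint (edgesWithin G Y) (edgesWithin G Z) :=
  Set.disjoint_left.mpr fun e hY hZ =>
    Set.disjoint_left.mp hYZ (hY.2 _ e.out_fst_mem) (hZ.2 _ e.out_fst_mem)

lemma ncard_edgeSet_diff_edgesWithin_union [Finite V] {Y Z : Set V} (hYZ : Disjoint Y Z) :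
    ((G.edgeSet \ (edgesWithin G Y ∪ edgesWithin G Z)).ncard : ℝ) =
      G.edgeSet.ncard - (edgesWithin G Y).ncard - (edgesWithin G Z).ncard := by
  have hsub : edgesWithin G Y ∪ edgesWithin G Z ⊆ G.edgeSet :=
    Set.union_subset (G.edgesWithin_subset_edgeSet Y) (G.edgesWithin_subset_edgeSet Z)
  have hcard := Set.ncard_sdiff_add_ncard_of_subset hsub
  rw [Set.ncard_union_eq (G.disjoint_edgesWithin hYZ)] at hcard
  rw [← hcard]
  push_cast
  ring

variable [Fintype V] [DecidableEq V] [DecidableRel G.Adj]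

lemma edgeEnergy_nonneg (f : V → ℝ) : 0 ≤ edgeEnergy G f :=
  Finset.sum_nonneg fun e _ => by
    induction e using Sym2.ind with
    | _ u v => exact sq_nonneg _

lemma lambdaOne_le_rayleigh {f : V → ℝ} (hsum : ∑ v, f v = 0) (hf : f ≠ 0) :
    lambdaOne G ≤ edgeEnergy G f / ∑ v, f v ^ 2 := by
  refine csInf_le ⟨0, ?_⟩ ⟨f, hsum, hf, rfl⟩
  rintro _ ⟨g, -, -, rfl⟩
  exact div_nonneg (edgeEnergy_nonneg G g) (Finset.sum_nonneg fun v _ => sq_nonneg (g v))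

lemma edgeEnergy_le_of_constant_on {f : V → ℝ} {Y Z : Set V} {M : ℝ} (hYZ : Disjoint Y Z)
    (hfY : ∀ u ∈ Y, ∀ v ∈ Y, f u = f v) (hfZ : ∀ u ∈ Z, ∀ v ∈ Z, f u = f v)
    (hM : ∀ u v, G.Adj u v → (f u - f v) ^ 2 ≤ M) :
    edgeEnergy G f ≤
      ((G.edgeSet.ncard : ℝ) - (edgesWithin G Y).ncard - (edgesWithin G Z).ncard) * M := by
  classical
  set W := edgesWithin G Y ∪ edgesWithin G Z
  set T : Sym2 V → ℝ := Sym2.lift ⟨fun u v => (f u - f v) ^ 2, fun u v => by ring⟩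
  have hT_inside : ∀ e ∈ W, T e = 0 := by
    intro e he
    induction e using Sym2.ind with
    | _ u v =>
      rcases he with ⟨-, he⟩ | ⟨-, he⟩
      · simp [T, hfY u (he u (Sym2.mem_mk_left u v)) v (he v (Sym2.mem_mk_right u v))]
      · simp [T, hfZ u (he u (Sym2.mem_mk_left u v)) v (he v (Sym2.mem_mk_right u v))]
  have hT_edge : ∀ e ∈ G.edgeSet, T e ≤ M := by
    intro e he
    induction e using Sym2.ind with
    | _ u v => exact hM u v he
  have hcross : ((G.edgeFinset.filter (· ∉ W)).card : ℝ) =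
      G.edgeSet.ncard - (edgesWithin G Y).ncard - (edgesWithin G Z).ncard := by
    rw [← G.ncard_edgeSet_diff_edgesWithin_union hYZ, ← Set.ncard_coe_finset]
    congr 2
    ext e
    simp only [W, Finset.coe_filter, mem_edgeFinset, Set.mem_sdiff, Set.mem_union, not_or]
    rfl
  calc edgeEnergy G f
      = ∑ e ∈ G.edgeFinset.filter (· ∈ W), T e +
          ∑ e ∈ G.edgeFinset.filter (· ∉ W), T e :=
        (Finset.sum_filter_add_sum_filter_not _ _ _).symm
    _ = ∑ e ∈ G.edgeFinset.filter (· ∉ W), T e := by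
        rw [Finset.sum_eq_zero fun e he => hT_inside e (Finset.mem_filter.mp he).2, zero_add]
    _ ≤ (G.edgeFinset.filter (· ∉ W)).card • M :=
        Finset.sum_le_card_nsmul _ _ _ fun e he =>
          hT_edge e (mem_edgeFinset.mp (Finset.mem_filter.mp he).1)
    _ = _ := by rw [nsmul_eq_mul, hcross]

end SimpleGraph

section TwoSetTest

variable {V : Type*}

lemma sum_indicator_const [Fintype V] (A : Set V) (c : ℝ) :
    ∑ v, A.indicator (fun _ => c) v = A.ncard * c := by
  classical
  rw [Finset.sum_indicator_eq_sum_filter]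
  simp [Set.ncard_eq_toFinset_card', Set.toFinset]

noncomputable def twoSetTest (Y Z : Set V) : V → ℝ :=
  Y.indicator (fun _ => 1 / (Y.ncard : ℝ)) - Z.indicator (fun _ => 1 / (Z.ncard : ℝ))

variable {Y Z : Set V}

lemma twoSetTest_of_mem_left (hYZ : Disjoint Y Z) {v : V} (hv : v ∈ Y) :
    twoSetTest Y Z v = 1 / Y.ncard := by
  simp [twoSetTest, hv, Set.disjoint_left.mp hYZ hv]

lemma twoSetTest_of_mem_right (hYZ : Disjoint Y Z) {v : V} (hv : v ∈ Z) :
    twoSetTest Y Z v = -(1 / Z.ncard) := by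
  simp [twoSetTest, hv, Set.disjoint_right.mp hYZ hv]

lemma twoSetTest_mem_Icc (v : V) :
    twoSetTest Y Z v ∈ Set.Icc (-(1 / (Z.ncard : ℝ))) (1 / Y.ncard) := by
  have hY : Y.indicator (fun _ => 1 / (Y.ncard : ℝ)) v ∈ Set.Icc 0 (1 / (Y.ncard : ℝ)) :=
    ⟨Set.indicator_nonneg (fun _ _ => by positivity) v,
      Set.indicator_le_self' (fun _ _ => by positivity) v⟩
  have hZ : Z.indicator (fun _ => 1 / (Z.ncard : ℝ)) v ∈ Set.Icc 0 (1 / (Z.ncard : ℝ)) :=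
    ⟨Set.indicator_nonneg (fun _ _ => by positivity) v,
      Set.indicator_le_self' (fun _ _ => by positivity) v⟩
  simp only [twoSetTest, Pi.sub_apply, Set.mem_Icc] at hY hZ ⊢
  constructor <;> linarith

lemma sq_twoSetTest_sub_le (u v : V) :
    (twoSetTest Y Z u - twoSetTest Y Z v) ^ 2 ≤ (1 / (Y.ncard : ℝ) + 1 / Z.ncard) ^ 2 := by
  obtain ⟨hu₀, hu₁⟩ := twoSetTest_mem_Icc (Y := Y) (Z := Z) u
  obtain ⟨hv₀, hv₁⟩ := twoSetTest_mem_Icc (Y := Y) (Z := Z) v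
  exact sq_le_sq' (by linarith) (by linarith)

lemma twoSetTest_ne_zero [Finite V] (hY : Y.Nonempty) (hYZ : Disjoint Y Z) :
    twoSetTest Y Z ≠ 0 := by
  obtain ⟨y, hy⟩ := hY
  have hYpos : (0 : ℝ) < Y.ncard := by exact_mod_cast (Set.nonempty_of_mem hy).ncard_pos
  refine Function.ne_iff.mpr ⟨y, ?_⟩
  rw [twoSetTest_of_mem_left hYZ hy]
  exact (one_div_pos.mpr hYpos).ne'

lemma sum_twoSetTest [Fintype V] (hY : Y.Nonempty) (hZ : Z.Nonempty) :
    ∑ v, twoSetTest Y Z v = 0 := by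
  have hY₀ : (Y.ncard : ℝ) ≠ 0 := by exact_mod_cast hY.ncard_pos.ne'
  have hZ₀ : (Z.ncard : ℝ) ≠ 0 := by exact_mod_cast hZ.ncard_pos.ne'
  simp only [twoSetTest, Pi.sub_apply, Finset.sum_sub_distrib, sum_indicator_const]
  field_simp
  ring

lemma sum_sq_twoSetTest [Fintype V] (hY : Y.Nonempty) (hZ : Z.Nonempty) (hYZ : Disjoint Y Z) :
    ∑ v, twoSetTest Y Z v ^ 2 = 1 / (Y.ncard : ℝ) + 1 / Z.ncard := by
  have hsq : ∀ v, twoSetTest Y Z v ^ 2 = Y.indicator (fun _ => (1 / (Y.ncard : ℝ)) ^ 2) v +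
      Z.indicator (fun _ => (1 / (Z.ncard : ℝ)) ^ 2) v := by
    intro v
    by_cases hvY : v ∈ Y
    · simp [twoSetTest_of_mem_left hYZ hvY, hvY, Set.disjoint_left.mp hYZ hvY]
    by_cases hvZ : v ∈ Z
    · simp [twoSetTest_of_mem_right hYZ hvZ, hvY, hvZ]
    · simp [twoSetTest, hvY, hvZ]
  have hY₀ : (Y.ncard : ℝ) ≠ 0 := by exact_mod_cast hY.ncard_pos.ne'
  have hZ₀ : (Z.ncard : ℝ) ≠ 0 := by exact_mod_cast hZ.ncard_pos.ne'
  simp only [hsq, Finset.sum_add_distrib, sum_indicator_const]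
  field_simp

end TwoSetTest

theorem lambdaOne_upper_bound_two_sets_general {V : Type*} [Fintype V] [DecidableEq V]
    (G : SimpleGraph V) [DecidableRel G.Adj]
    (Y Z : Set V) (hY : Y.Nonempty) (hZ : Z.Nonempty) (hYZ : Disjoint Y Z) :
    lambdaOne G ≤
      ((G.edgeSet.ncard : ℝ) - (edgesWithin G Y).ncard - (edgesWithin G Z).ncard) *
        (1 / (Y.ncard : ℝ) + 1 / (Z.ncard : ℝ)) := by
  set c := 1 / (Y.ncard : ℝ) + 1 / (Z.ncard : ℝ)
  have hc : 0 < c := by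
    have : (0 : ℝ) < Y.ncard := by exact_mod_cast hY.ncard_pos
    have : (0 : ℝ) < Z.ncard := by exact_mod_cast hZ.ncard_pos
    positivity
  have hnorm : ∑ v, twoSetTest Y Z v ^ 2 = c := sum_sq_twoSetTest hY hZ hYZ
  have henergy := G.edgeEnergy_le_of_constant_on hYZ
    (fun u hu v hv => by rw [twoSetTest_of_mem_left hYZ hu, twoSetTest_of_mem_left hYZ hv])
    (fun u hu v hv => by rw [twoSetTest_of_mem_right hYZ hu, twoSetTest_of_mem_right hYZ hv])
    (fun u v _ => sq_twoSetTest_sub_le u v)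
  calc lambdaOne G ≤ edgeEnergy G (twoSetTest Y Z) / c :=
        hnorm ▸ G.lambdaOne_le_rayleigh (sum_twoSetTest hY hZ) (twoSetTest_ne_zero hY hYZ)
    _ ≤ _ * c ^ 2 / c := by gcongr
    _ = _ * c := by field_simp

/-- for disjoint nonempty `Y, Z ⊆ V`,
`λ₁ ≤ (|E| − |E(Y)| − |E(Z)|)·(1/|Y| + 1/|Z|)`. -/
theorem lambdaOne_upper_bound_two_sets {V : Type*} [Fintype V] [DecidableEq V]
    (G : SimpleGraph V) [DecidableRel G.Adj] (hG : G.Connected)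
    (Y Z : Set V) (hY : Y.Nonempty) (hZ : Z.Nonempty) (hYZ : Disjoint Y Z) :
    lambdaOne G ≤
      ((G.edgeSet.ncard : ℝ) - (edgesWithin G Y).ncard - (edgesWithin G Z).ncard) *
        (1 / (Y.ncard : ℝ) + 1 / (Z.ncard : ℝ)) :=
  lambdaOne_upper_bound_two_sets_general G Y Z hY hZ hYZ
end
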